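/- arXiv:2412.05064 — 4 statements merged into one kernel-verified Lean document; each statement's English description precedes it below -/
import Mathlib

section
/- For $0 \leq s \leq t$ real, define $g(s,t) = s^{3/2} + t^{3/2} - \frac{1}{2}(t-s)^{3/2} - \frac{1}{2}(t+s)^{3/2}$. Then $g(s,t) \geq 0$ for all $0 \leq s \leq t$, and $g$ is a valid covariance function in the sense that for any $0 \leq t_1 < \dots < t_m$ and real constants $c_1, \dots, c_m$, $\sum_{i,j} c_i c_j g(\min(t_i,t_j), \max(t_i,t_j)) \geq 0$. -/
/-!
For `0 < α < 2` and every real `a`, substituting `x ↦ x / |a|` gives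
`∫₀^∞ (1 - cos (a x)) x^(-1-α) dx = C_α |a|^α` with `0 < C_α < ∞`. Combined with
`(1 - cos u)(1 - cos v) = (1 - cos u) + (1 - cos v) - ((1 - cos (u - v)) + (1 - cos (u + v))) / 2`,
this writes `C_α (|s|^α + |t|^α - (|s - t|^α + |s + t|^α) / 2)` as the Gram integral
`∫₀^∞ (1 - cos (s x)) (1 - cos (t x)) x^(-1-α) dx`, so this kernel (the covariance of
sub-fractional Brownian motion of Hurst index `α / 2`) is nonnegative and positive semidefinite.
On `0 ≤ s ≤ t` and for `α = 3/2` it is `gCov s t`.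
-/

open Real Filter

/-- The covariance function of the Gaussian limit process in the `d = 3` case. -/
noncomputable def gCov (s t : ℝ) : ℝ :=
  s ^ ((3:ℝ)/2) + t ^ ((3:ℝ)/2) - (1/2) * (t - s) ^ ((3:ℝ)/2) - (1/2) * (t + s) ^ ((3:ℝ)/2)

open MeasureTheory Set

section Gram

variable {X ι : Type*} [MeasurableSpace X] [Fintype ι]

theorem sum_sum_mul_integral_mul_nonneg {μ : Measure X} {w : X → ℝ} (hw : 0 ≤ᵐ[μ] w)
    (f : ι → X → ℝ) (hf : ∀ i j, Integrable (fun x => f i x * f j x * w x) μ) (c : ι → ℝ) :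
    0 ≤ ∑ i, ∑ j, c i * c j * ∫ x, f i x * f j x * w x ∂μ := by
  have hsq : ∀ x, (∑ i, c i * f i x) ^ 2 * w x = ∑ i, ∑ j, c i * c j * (f i x * f j x * w x) := by
    intro x
    rw [sq, Finset.sum_mul_sum, Finset.sum_mul]
    refine Finset.sum_congr rfl fun i _ => ?_
    rw [Finset.sum_mul]
    exact Finset.sum_congr rfl fun j _ => by ring
  calc 0 ≤ ∫ x, (∑ i, c i * f i x) ^ 2 * w x ∂μ :=
        integral_nonneg_of_ae (hw.mono fun x hx => mul_nonneg (sq_nonneg _) hx)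
    _ = ∑ i, ∑ j, c i * c j * ∫ x, f i x * f j x * w x ∂μ := by
        simp_rw [hsq]
        rw [integral_finsetSum _ fun i _ => integrable_finsetSum _ fun j _ => (hf i j).const_mul _]
        refine Finset.sum_congr rfl fun i _ => ?_
        rw [integral_finsetSum _ fun j _ => (hf i j).const_mul _]
        simp_rw [integral_const_mul]

end Gram

section OneSubCos

variable {α : ℝ}

noncomputable def oneSubCosWeight (α a x : ℝ) : ℝ := (1 - cos (a * x)) * x ^ (-(α + 1))

noncomputable def oneSubCosConst (α : ℝ) : ℝ := ∫ x in Ioi 0, oneSubCosWeight α 1 x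

theorem oneSubCosWeight_nonneg (α a : ℝ) {x : ℝ} (hx : 0 ≤ x) : 0 ≤ oneSubCosWeight α a x :=
  mul_nonneg (sub_nonneg.2 (cos_le_one _)) (rpow_nonneg hx _)

theorem oneSubCosWeight_abs (α a : ℝ) : oneSubCosWeight α |a| = oneSubCosWeight α a := by
  ext x
  rcases abs_choice a with h | h <;> simp [oneSubCosWeight, h]

theorem oneSubCosWeight_zero (α : ℝ) : oneSubCosWeight α 0 = 0 := by
  ext x
  simp [oneSubCosWeight]

theorem oneSubCosWeight_eq_rpow_mul {b x : ℝ} (hb : 0 < b) (hx : 0 < x) :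
    oneSubCosWeight α b x = b ^ (α + 1) * oneSubCosWeight α 1 (b * x) := by
  have hb' : b ^ (α + 1) * b ^ (-(α + 1)) = 1 := by
    rw [← rpow_add hb, add_neg_cancel, rpow_zero]
  simp only [oneSubCosWeight, one_mul, mul_rpow hb.le hx.le]
  linear_combination (1 - cos (b * x)) * x ^ (-(α + 1)) * hb'.symm

theorem integrableOn_oneSubCosWeight_one (hα₀ : 0 < α) (hα₂ : α < 2) :
    IntegrableOn (oneSubCosWeight α 1) (Ioi 0) := by
  have hmeas : AEStronglyMeasurable (oneSubCosWeight α 1) := by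
    unfold oneSubCosWeight; fun_prop
  -- near `0`, `1 - cos x ≤ x ^ 2 / 2`; near `∞`, `1 - cos x ≤ 2`
  have h₀ : IntegrableOn (oneSubCosWeight α 1) (Ioc 0 1) := by
    rw [integrableOn_Ioc_iff_integrableOn_Ioo]
    refine Integrable.mono' (((intervalIntegral.integrableOn_Ioo_rpow_iff one_pos).2
      (by linarith : -1 < 1 - α)).const_mul (1 / 2)) hmeas.restrict ?_
    filter_upwards [ae_restrict_mem measurableSet_Ioo] with x hx
    replace hx : 0 < x := hx.1
    have hpow : x ^ 2 * x ^ (-(α + 1)) = x ^ (1 - α) := by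
      rw [← rpow_natCast, ← rpow_add hx]; norm_num; ring_nf
    rw [norm_of_nonneg (oneSubCosWeight_nonneg α 1 hx.le), oneSubCosWeight, one_mul, ← hpow]
    nlinarith [one_sub_sq_div_two_le_cos (x := x), rpow_nonneg hx.le (-(α + 1))]
  have h₁ : IntegrableOn (oneSubCosWeight α 1) (Ioi 1) := by
    refine Integrable.mono' ((integrableOn_Ioi_rpow_of_lt (by linarith : -(α + 1) < -1)
      one_pos).const_mul 2) hmeas.restrict ?_
    filter_upwards [ae_restrict_mem measurableSet_Ioi] with x hx
    have hx : (0 : ℝ) < x := one_pos.trans hx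
    rw [norm_of_nonneg (oneSubCosWeight_nonneg α 1 hx.le), oneSubCosWeight]
    nlinarith [neg_one_le_cos (1 * x), rpow_nonneg hx.le (-(α + 1))]
  rw [← Ioc_union_Ioi_eq_Ioi zero_le_one]
  exact h₀.union h₁

theorem integrableOn_oneSubCosWeight (hα₀ : 0 < α) (hα₂ : α < 2) (a : ℝ) :
    IntegrableOn (oneSubCosWeight α a) (Ioi 0) := by
  rw [← oneSubCosWeight_abs]
  rcases (abs_nonneg a).eq_or_lt' with ha | ha
  · rw [ha, oneSubCosWeight_zero]
    exact integrableOn_zero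
  · have hscaled : IntegrableOn (fun x => oneSubCosWeight α 1 (|a| * x)) (Ioi 0) :=
      (integrableOn_Ioi_comp_mul_left_iff _ 0 ha).2 (by
        simpa using integrableOn_oneSubCosWeight_one hα₀ hα₂)
    exact IntegrableOn.congr_fun (hscaled.const_mul (|a| ^ (α + 1)))
      (fun x hx => (oneSubCosWeight_eq_rpow_mul ha hx).symm) measurableSet_Ioi

theorem integral_oneSubCosWeight (hα : α ≠ 0) (a : ℝ) :
    ∫ x in Ioi 0, oneSubCosWeight α a x = |a| ^ α * oneSubCosConst α := by
  rw [← oneSubCosWeight_abs]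
  rcases (abs_nonneg a).eq_or_lt' with ha | ha
  · simp [ha, oneSubCosWeight_zero, zero_rpow hα]
  · have hpow : |a| ^ (α + 1) * |a|⁻¹ = |a| ^ α := by
      rw [rpow_add ha, rpow_one, mul_inv_cancel_right₀ ha.ne']
    rw [setIntegral_congr_fun measurableSet_Ioi fun x hx => oneSubCosWeight_eq_rpow_mul ha hx,
      integral_const_mul, integral_comp_mul_left_Ioi _ 0 ha, mul_zero, smul_eq_mul, ← mul_assoc,
      hpow, oneSubCosConst]

theorem oneSubCosConst_pos (hα₀ : 0 < α) (hα₂ : α < 2) : 0 < oneSubCosConst α := by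
  rw [oneSubCosConst, setIntegral_pos_iff_support_of_nonneg_ae
    ((ae_restrict_mem measurableSet_Ioi).mono fun x hx => oneSubCosWeight_nonneg α 1 (le_of_lt hx))
    (integrableOn_oneSubCosWeight_one hα₀ hα₂)]
  refine lt_of_lt_of_le ?_ (measure_mono (s := Ioo 0 (2 * π)) fun x ⟨hx₀, hx₁⟩ => ⟨?_, hx₀⟩)
  · simp [pi_pos]
  · have hcos : cos x ≠ 1 := fun h =>
      hx₀.ne' ((cos_eq_one_iff_of_lt_of_lt (by linarith [pi_pos]) hx₁).1 h)
    simp only [Function.mem_support, oneSubCosWeight, one_mul]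
    exact mul_ne_zero (sub_ne_zero.2 (Ne.symm hcos)) (rpow_pos_of_pos hx₀ _).ne'

end OneSubCos

section SubFBM

variable {α : ℝ}

noncomputable def subFBMCov (α s t : ℝ) : ℝ :=
  |s| ^ α + |t| ^ α - (|s - t| ^ α + |s + t| ^ α) / 2

theorem subFBMCov_comm (α s t : ℝ) : subFBMCov α s t = subFBMCov α t s := by
  rw [subFBMCov, subFBMCov, abs_sub_comm, add_comm s, add_comm (|s| ^ α)]

theorem one_sub_cos_mul_one_sub_cos_mul_rpow (α s t x : ℝ) :
    (1 - cos (s * x)) * (1 - cos (t * x)) * x ^ (-(α + 1)) =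
      oneSubCosWeight α s x + oneSubCosWeight α t x
        - (oneSubCosWeight α (s - t) x + oneSubCosWeight α (s + t) x) / 2 := by
  simp only [oneSubCosWeight, sub_mul, add_mul, cos_sub, cos_add]
  ring

theorem integrableOn_one_sub_cos_mul_one_sub_cos (hα₀ : 0 < α) (hα₂ : α < 2) (s t : ℝ) :
    IntegrableOn (fun x => (1 - cos (s * x)) * (1 - cos (t * x)) * x ^ (-(α + 1))) (Ioi 0) := by
  have h := integrableOn_oneSubCosWeight hα₀ hα₂
  simp_rw [one_sub_cos_mul_one_sub_cos_mul_rpow]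
  exact ((h s).add (h t)).sub (((h (s - t)).add (h (s + t))).div_const 2)

theorem integral_one_sub_cos_mul_one_sub_cos (hα₀ : 0 < α) (hα₂ : α < 2) (s t : ℝ) :
    ∫ x in Ioi 0, (1 - cos (s * x)) * (1 - cos (t * x)) * x ^ (-(α + 1)) =
      oneSubCosConst α * subFBMCov α s t := by
  have h := integrableOn_oneSubCosWeight hα₀ hα₂
  simp_rw [one_sub_cos_mul_one_sub_cos_mul_rpow]
  have hst : IntegrableOn (fun x => oneSubCosWeight α s x + oneSubCosWeight α t x) (Ioi 0) :=
    (h s).add (h t)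
  have hsub : IntegrableOn (fun x => (oneSubCosWeight α (s - t) x
      + oneSubCosWeight α (s + t) x) / 2) (Ioi 0) := ((h (s - t)).add (h (s + t))).div_const 2
  rw [integral_sub hst hsub, integral_add (h s) (h t), integral_div,
    integral_add (h (s - t)) (h (s + t))]
  simp only [integral_oneSubCosWeight hα₀.ne', subFBMCov]
  ring

theorem subFBMCov_nonneg (hα₀ : 0 < α) (hα₂ : α < 2) (s t : ℝ) : 0 ≤ subFBMCov α s t := by
  refine nonneg_of_mul_nonneg_right ?_ (oneSubCosConst_pos hα₀ hα₂)
  rw [← integral_one_sub_cos_mul_one_sub_cos hα₀ hα₂]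
  refine setIntegral_nonneg measurableSet_Ioi fun x hx => ?_
  exact mul_nonneg (mul_nonneg (sub_nonneg.2 (cos_le_one _)) (sub_nonneg.2 (cos_le_one _)))
    (rpow_nonneg (le_of_lt hx) _)

theorem subFBMCov_posSemidef {ι : Type*} [Fintype ι] (hα₀ : 0 < α) (hα₂ : α < 2)
    (t c : ι → ℝ) : 0 ≤ ∑ i, ∑ j, c i * c j * subFBMCov α (t i) (t j) := by
  refine nonneg_of_mul_nonneg_right ?_ (oneSubCosConst_pos hα₀ hα₂)
  have hgram := sum_sum_mul_integral_mul_nonneg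
    ((ae_restrict_mem measurableSet_Ioi).mono fun x (hx : 0 < x) => rpow_nonneg hx.le (-(α + 1)))
    (fun i x => 1 - cos (t i * x))
    (fun i j => integrableOn_one_sub_cos_mul_one_sub_cos hα₀ hα₂ (t i) (t j)) c
  simp only [integral_one_sub_cos_mul_one_sub_cos hα₀ hα₂] at hgram
  rw [Finset.mul_sum]
  refine hgram.trans_eq (Finset.sum_congr rfl fun i _ => ?_)
  rw [Finset.mul_sum]
  exact Finset.sum_congr rfl fun j _ => by ring

end SubFBM

theorem gCov_eq_subFBMCov {s t : ℝ} (hs : 0 ≤ s) (hst : s ≤ t) :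
    gCov s t = subFBMCov (3 / 2) s t := by
  rw [gCov, subFBMCov, abs_of_nonneg hs, abs_of_nonneg (hs.trans hst), abs_sub_comm,
    abs_of_nonneg (sub_nonneg.2 hst), abs_of_nonneg (by linarith : 0 ≤ s + t), add_comm s t]
  ring

theorem gCov_min_max {s t : ℝ} (hs : 0 ≤ s) (ht : 0 ≤ t) :
    gCov (min s t) (max s t) = subFBMCov (3 / 2) s t := by
  rcases le_total s t with hst | hts
  · rw [min_eq_left hst, max_eq_right hst, gCov_eq_subFBMCov hs hst]
  · rw [min_eq_right hts, max_eq_left hts, gCov_eq_subFBMCov ht hts, subFBMCov_comm]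

theorem gCov_nonneg_and_posSemidef :
    (∀ s t : ℝ, 0 ≤ s → s ≤ t → 0 ≤ gCov s t) ∧
    (∀ (m : ℕ) (tvec c : Fin m → ℝ), (∀ i, 0 ≤ tvec i) → StrictMono tvec →
      0 ≤ ∑ i : Fin m, ∑ j : Fin m,
        c i * c j * gCov (min (tvec i) (tvec j)) (max (tvec i) (tvec j))) := by
  have hα₀ : (0 : ℝ) < 3 / 2 := by norm_num
  have hα₂ : (3 / 2 : ℝ) < 2 := by norm_num
  refine ⟨fun s t hs hst => ?_, fun m tvec c htvec _ => ?_⟩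
  · rw [gCov_eq_subFBMCov hs hst]
    exact subFBMCov_nonneg hα₀ hα₂ s t
  · simp only [gCov_min_max (htvec _) (htvec _)]
    exact subFBMCov_posSemidef hα₀ hα₂ tvec c
end

section
/- Suppose $q : (0,\infty) \to [0,\infty)$ is measurable with $\int_0^\infty q(r)\,dr < \infty$ and $\lim_{r\to\infty} r^{3/2} q(r) = (4\pi)^{-3/2}$. Then for any fixed $0 \leq s < t$, $\lim_{N\to\infty} \frac{1}{\sqrt{N}} \int_0^s \int_0^{(t-\theta)N} \int_0^{(s-\theta)N} q(r_1+r_2)\,dr_1\,dr_2\,d\theta = \frac{1}{3\pi^{3/2}}\left(s^{3/2} + t^{3/2} - \frac{1}{2}(t-s)^{3/2} - \frac{1}{2}(t+s)^{3/2}\right)$. -/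
/-!
Write `T(u) = ∫_u^∞ q` and `G(x) = ∫_0^x T`. Integrating out `r₂` and then `r₁` turns the
inner double integral into the increment `G(a) + G(b) - G(a + b)`, with `a = (t - θ) N` and
`b = (s - θ) N`. Integrating the asymptotics `q(r) ~ c r^{-3/2}` twice gives
`T(u) ~ 2c u^{-1/2}` and `G(x) ~ 4c x^{1/2}`, so `N^{-1/2} G(a N) → 4c a^{1/2}` with a bound
`A a^{1/2} + B` uniform in `N`, and dominated convergence in `θ` reduces the limit to an
elementary integral of square roots.
-/

open Real Filter MeasureTheory Set Asymptotics Topology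

section IntegralAsymptotics

variable {f g : ℝ → ℝ} {a : ℝ}

theorem Asymptotics.IsLittleO.integral_Ioi (hfg : f =o[atTop] g) (hg : ∀ᶠ x in atTop, 0 ≤ g x)
    (hgi : IntegrableOn g (Ioi a)) :
    (fun x => ∫ r in Ioi x, f r) =o[atTop] fun x => ∫ r in Ioi x, g r := by
  refine isLittleO_iff.2 fun ε hε => ?_
  obtain ⟨R, hR⟩ := ((isLittleO_iff.1 hfg hε).and hg).exists_forall_of_atTop
  filter_upwards [eventually_ge_atTop R, eventually_ge_atTop a] with x hxR hxa
  have hg_nonneg : ∀ r ∈ Ioi x, 0 ≤ g r := fun r hr => (hR r (hxR.trans hr.le)).2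
  calc ‖∫ r in Ioi x, f r‖ ≤ ∫ r in Ioi x, ε * g r := by
        refine norm_integral_le_of_norm_le ((hgi.mono_set (Ioi_subset_Ioi hxa)).const_mul ε) ?_
        filter_upwards [ae_restrict_mem measurableSet_Ioi] with r hr
        simpa [abs_of_nonneg (hg_nonneg r hr)] using (hR r (hxR.trans hr.le)).1
    _ = ε * ‖∫ r in Ioi x, g r‖ := by
        rw [integral_const_mul, norm_of_nonneg (setIntegral_nonneg measurableSet_Ioi hg_nonneg)]

theorem Asymptotics.IsLittleO.intervalIntegral (hfg : f =o[atTop] g)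
    (hg : ∀ᶠ x in atTop, 0 ≤ g x) (hf : ∀ x ≥ a, IntervalIntegrable f volume a x)
    (hgi : ∀ x ≥ a, IntervalIntegrable g volume a x)
    (hg_top : Tendsto (fun x => ∫ u in a..x, g u) atTop atTop) :
    (fun x => ∫ u in a..x, f u) =o[atTop] fun x => ∫ u in a..x, g u := by
  refine isLittleO_iff.2 fun ε hε => ?_
  obtain ⟨R, hR⟩ := ((isLittleO_iff.1 hfg (half_pos hε)).and
    (hg.and (eventually_ge_atTop a))).exists_forall_of_atTop
  have hRa : a ≤ R := (hR R le_rfl).2.2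
  set C := ‖∫ u in a..R, f u‖ + ε / 2 * |∫ u in a..R, g u|
  filter_upwards [eventually_ge_atTop R, hg_top.eventually_ge_atTop (2 / ε * C)] with x hxR hxC
  have hC0 : 0 ≤ C := by positivity
  have hI : 0 ≤ ∫ u in a..x, g u := le_trans (by positivity) hxC
  have hC : C ≤ ε / 2 * ∫ u in a..x, g u :=
    calc C = ε / 2 * (2 / ε * C) := by field_simp
      _ ≤ ε / 2 * ∫ u in a..x, g u := by gcongr
  have hfR : IntervalIntegrable f volume R x := (hf R hRa).symm.trans (hf x (hRa.trans hxR))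
  have hgR : IntervalIntegrable g volume R x := (hgi R hRa).symm.trans (hgi x (hRa.trans hxR))
  have htail : ‖∫ u in R..x, f u‖ ≤ ε / 2 * ∫ u in R..x, g u := by
    rw [← intervalIntegral.integral_const_mul]
    refine intervalIntegral.norm_integral_le_of_norm_le hxR ?_ (hgR.const_mul _)
    filter_upwards with u hu
    simpa [abs_of_nonneg (hR u hu.1.le).2.1] using (hR u hu.1.le).1
  have hsplit : ∫ u in R..x, g u = (∫ u in a..x, g u) - ∫ u in a..R, g u :=
    (intervalIntegral.integral_interval_sub_left (hgi x (hRa.trans hxR)) (hgi R hRa)).symm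
  calc ‖∫ u in a..x, f u‖ = ‖(∫ u in a..R, f u) + ∫ u in R..x, f u‖ := by
        rw [intervalIntegral.integral_add_adjacent_intervals (hf R hRa) hfR]
    _ ≤ ‖∫ u in a..R, f u‖ + ε / 2 * ((∫ u in a..x, g u) - ∫ u in a..R, g u) :=
        hsplit ▸ (norm_add_le _ _).trans (by gcongr)
    _ ≤ C + ε / 2 * ∫ u in a..x, g u := by
        have := mul_le_mul_of_nonneg_left (neg_abs_le (∫ u in a..R, g u)) (half_pos hε).le
        simp only [C]
        linarith
    _ ≤ ε * ‖∫ u in a..x, g u‖ := by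
        rw [norm_of_nonneg hI]
        linarith

theorem tendsto_rpow_mul_iff_isLittleO {p c : ℝ} :
    Tendsto (fun x => x ^ p * f x) atTop (𝓝 c) ↔
      (fun x => f x - c * x ^ (-p)) =o[atTop] fun x => x ^ (-p) := by
  have hpos : ∀ᶠ x : ℝ in atTop, 0 < x ^ (-p) :=
    (eventually_gt_atTop 0).mono fun x hx => rpow_pos_of_pos hx _
  rw [isLittleO_iff_tendsto' (hpos.mono fun x hx h => absurd h hx.ne'),
    ← tendsto_sub_nhds_zero_iff]
  refine tendsto_congr' ?_
  filter_upwards [eventually_gt_atTop 0] with x hx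
  rw [sub_div, mul_div_cancel_right₀ _ (rpow_pos_of_pos hx _).ne', rpow_neg hx.le, div_inv_eq_mul,
    mul_comm]

theorem tendsto_rpow_mul_integral_Ioi {p c : ℝ} (hp : 1 < p) (hf : IntegrableOn f (Ioi a))
    (hlim : Tendsto (fun x => x ^ p * f x) atTop (𝓝 c)) :
    Tendsto (fun x => x ^ (p - 1) * ∫ r in Ioi x, f r) atTop (𝓝 (c / (p - 1))) := by
  rw [tendsto_rpow_mul_iff_isLittleO] at hlim ⊢
  have hpow : ∀ x : ℝ, 0 < x → IntegrableOn (fun r : ℝ => r ^ (-p)) (Ioi x) := fun x hx =>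
    integrableOn_Ioi_rpow_of_lt (by linarith) hx
  have hval : ∀ x : ℝ, 0 < x → ∫ r in Ioi x, r ^ (-p) = (p - 1)⁻¹ * x ^ (-(p - 1)) :=
    fun x hx => by
    rw [integral_Ioi_rpow_of_lt (by linarith) hx, show -p + 1 = -(p - 1) by ring, neg_div,
      ← div_neg, neg_neg, div_eq_inv_mul]
  have h := hlim.integral_Ioi ((eventually_gt_atTop 0).mono fun r hr => (rpow_pos_of_pos hr _).le)
    (hpow 1 one_pos)
  refine IsLittleO.of_const_mul_right (c := (p - 1)⁻¹) (h.congr' ?_ ?_)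
  · filter_upwards [eventually_gt_atTop (max a 0)] with x hx
    rw [integral_sub (hf.mono_set (Ioi_subset_Ioi ((le_max_left a 0).trans hx.le)))
      ((hpow x (lt_of_le_of_lt (le_max_right a 0) hx)).const_mul c), integral_const_mul,
      hval x (lt_of_le_of_lt (le_max_right a 0) hx)]
    ring
  · filter_upwards [eventually_gt_atTop 0] with x hx using hval x hx

theorem tendsto_rpow_mul_intervalIntegral {α d : ℝ} (hα : α < 1)
    (hf : ∀ x ≥ 0, IntervalIntegrable f volume 0 x)
    (hlim : Tendsto (fun x => x ^ α * f x) atTop (𝓝 d)) :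
    Tendsto (fun x => x ^ (α - 1) * ∫ u in 0..x, f u) atTop (𝓝 (d / (1 - α))) := by
  rw [tendsto_rpow_mul_iff_isLittleO] at hlim ⊢
  have hpow : ∀ x, IntervalIntegrable (fun u : ℝ => u ^ (-α)) volume 0 x := fun x =>
    intervalIntegral.intervalIntegrable_rpow' (by linarith)
  have hval : ∀ x, ∫ u in 0..x, u ^ (-α) = (1 - α)⁻¹ * x ^ (-(α - 1)) := fun x => by
    rw [integral_rpow (Or.inl (by linarith)), zero_rpow (by linarith)]
    ring_nf
  have htop : Tendsto (fun x => ∫ u in 0..x, u ^ (-α)) atTop atTop := by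
    simp only [hval]
    exact (tendsto_rpow_atTop (by linarith)).const_mul_atTop (inv_pos.2 (by linarith))
  have h := hlim.intervalIntegral
    ((eventually_gt_atTop 0).mono fun r hr => (rpow_pos_of_pos hr _).le)
    (fun x hx => (hf x hx).sub ((hpow x).const_mul d)) (fun x _ => hpow x) htop
  refine IsLittleO.of_const_mul_right (c := (1 - α)⁻¹) (h.congr' ?_ (.of_forall hval))
  filter_upwards [eventually_ge_atTop 0] with x hx
  rw [intervalIntegral.integral_sub (hf x hx) ((hpow x).const_mul d),
    intervalIntegral.integral_const_mul, hval]
  ring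

noncomputable def integratedTail (q : ℝ → ℝ) (x : ℝ) : ℝ :=
  ∫ u in (0:ℝ)..x, ∫ r in Ioi u, q r

section IntegratedTail

variable {q : ℝ → ℝ}

theorem intervalIntegrable_integral_Ioi (hq : IntegrableOn q (Ioi 0)) {x y : ℝ} (hx : 0 ≤ x)
    (hy : 0 ≤ y) : IntervalIntegrable (fun u => ∫ r in Ioi u, q r) volume x y :=
  (hq.continuousOn_Ici_primitive_Ioi.mono fun _ hu =>
    le_min hx hy |>.trans hu.1).intervalIntegrable

theorem continuousOn_integratedTail (hq : IntegrableOn q (Ioi 0)) :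
    ContinuousOn (integratedTail q) (Ici 0) := by
  refine continuousOn_of_locally_continuousOn fun x hx =>
    ⟨Iio (x + 1), isOpen_Iio, by simp, ?_⟩
  refine (intervalIntegral.continuousOn_primitive_interval'
    (intervalIntegrable_integral_Ioi hq le_rfl (y := x + 1) (by linarith [mem_Ici.1 hx]))
    left_mem_uIcc).mono ?_
  rintro y ⟨hy₀, hy₁⟩
  exact ⟨inf_le_left.trans hy₀, (mem_Iio.1 hy₁).le.trans le_sup_right⟩

theorem integral_integral_comp_add (hq : IntegrableOn q (Ioi 0)) {a b : ℝ} (ha : 0 ≤ a)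
    (hb : 0 ≤ b) :
    ∫ r₁ in (0:ℝ)..a, ∫ r₂ in (0:ℝ)..b, q (r₁ + r₂) =
      integratedTail q a + integratedTail q b - integratedTail q (a + b) := by
  have hinner : EqOn (fun r₁ => ∫ r₂ in (0:ℝ)..b, q (r₁ + r₂))
      (fun r₁ => (∫ r in Ioi r₁, q r) - ∫ r in Ioi (r₁ + b), q r) (uIcc 0 a) := by
    intro r₁ hr₁
    rw [uIcc_of_le ha] at hr₁
    simp only [intervalIntegral.integral_comp_add_left q r₁, add_zero]
    exact (intervalIntegral.integral_Ioi_sub_Ioi (hq.mono_set (Ioi_subset_Ioi hr₁.1))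
      (by linarith)).symm
  have hshift : IntervalIntegrable (fun r₁ => ∫ r in Ioi (r₁ + b), q r) volume 0 a := by
    simpa using (intervalIntegrable_integral_Ioi hq hb (add_nonneg ha hb)).comp_add_right b
  rw [intervalIntegral.integral_congr hinner, intervalIntegral.integral_sub
    (intervalIntegrable_integral_Ioi hq le_rfl ha) hshift,
    intervalIntegral.integral_comp_add_right (fun u => ∫ r in Ioi u, q r) b, zero_add,
    add_comm a b,
    ← intervalIntegral.integral_interval_sub_left
      (intervalIntegrable_integral_Ioi hq le_rfl (add_nonneg hb ha))
      (intervalIntegrable_integral_Ioi hq le_rfl hb)]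
  unfold integratedTail
  ring

theorem tendsto_rpow_mul_integratedTail {p c : ℝ} (hp₁ : 1 < p) (hp₂ : p < 2)
    (hq : IntegrableOn q (Ioi 0)) (hlim : Tendsto (fun r => r ^ p * q r) atTop (𝓝 c)) :
    Tendsto (fun x => x ^ (p - 2) * integratedTail q x) atTop
      (𝓝 (c / ((p - 1) * (2 - p)))) := by
  have h := tendsto_rpow_mul_intervalIntegral (by linarith : p - 1 < 1)
    (fun x hx => intervalIntegrable_integral_Ioi hq le_rfl hx)
    (tendsto_rpow_mul_integral_Ioi hp₁ hq hlim)
  rwa [show p - 2 = p - 1 - 1 by ring, ← div_div, show 2 - p = 1 - (p - 1) by ring]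

end IntegratedTail

section Scaling

variable {G : ℝ → ℝ} {γ κ : ℝ}

theorem tendsto_rpow_neg_mul_comp_mul_natCast (hγ : 0 < γ) (hG0 : G 0 = 0)
    (hlim : Tendsto (fun y => y ^ (-γ) * G y) atTop (𝓝 κ)) {x : ℝ} (hx : 0 ≤ x) :
    Tendsto (fun N : ℕ => (N : ℝ) ^ (-γ) * G (x * N)) atTop (𝓝 (κ * x ^ γ)) := by
  rcases hx.eq_or_lt with rfl | hx
  · simp [hG0, zero_rpow hγ.ne']
  have hxN : Tendsto (fun N : ℕ => x * N) atTop atTop :=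
    tendsto_natCast_atTop_atTop.const_mul_atTop hx
  refine ((hlim.comp hxN).mul_const (x ^ γ)).congr fun N => ?_
  have hxγ : x ^ γ ≠ 0 := (rpow_pos_of_pos hx γ).ne'
  simp only [Function.comp, mul_rpow hx.le (Nat.cast_nonneg N), rpow_neg hx.le]
  field_simp

theorem exists_abs_le_rpow_add_of_tendsto (hG : ContinuousOn G (Ici 0))
    (hlim : Tendsto (fun y => y ^ (-γ) * G y) atTop (𝓝 κ)) :
    ∃ A B : ℝ, 0 ≤ B ∧ ∀ x ≥ 0, |G x| ≤ A * x ^ γ + B := by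
  obtain ⟨R, hR⟩ := ((hlim.norm.eventually (eventually_le_nhds (lt_add_one ‖κ‖))).and
    (eventually_gt_atTop 0)).exists_forall_of_atTop
  obtain ⟨C, hC⟩ := isCompact_Icc.exists_bound_of_continuousOn
    (hG.mono (Icc_subset_Ici_self : Icc 0 R ⊆ Ici 0))
  refine ⟨‖κ‖ + 1, max C 0, le_max_right _ _, fun x hx => ?_⟩
  have hA : 0 ≤ (‖κ‖ + 1) * x ^ γ := by positivity
  rcases le_total x R with hxR | hxR
  · have := hC x ⟨hx, hxR⟩
    rw [norm_eq_abs] at this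
    linarith [le_max_left C 0]
  · obtain ⟨hbound, hx₀⟩ := hR x hxR
    have hxγ : 0 < x ^ γ := rpow_pos_of_pos hx₀ γ
    have hG_eq : |G x| = x ^ γ * ‖x ^ (-γ) * G x‖ := by
      rw [norm_mul, norm_of_nonneg (rpow_nonneg hx _), rpow_neg hx, norm_eq_abs,
        mul_inv_cancel_left₀ hxγ.ne']
    rw [hG_eq]
    nlinarith [le_max_right C 0]

theorem abs_rpow_neg_mul_comp_mul_natCast_le (hγ : 0 ≤ γ) {A B : ℝ} (hB : 0 ≤ B)
    (hAB : ∀ x ≥ 0, |G x| ≤ A * x ^ γ + B) {x : ℝ} (hx : 0 ≤ x) {N : ℕ} (hN : 1 ≤ N) :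
    |(N : ℝ) ^ (-γ) * G (x * N)| ≤ A * x ^ γ + B := by
  have hN₀ : (0 : ℝ) < N := by exact_mod_cast hN
  have hNγ : (N : ℝ) ^ (-γ) ≤ 1 :=
    rpow_le_one_of_one_le_of_nonpos (by exact_mod_cast hN) (by linarith)
  calc |(N : ℝ) ^ (-γ) * G (x * N)| ≤ (N : ℝ) ^ (-γ) * (A * (x * N) ^ γ + B) := by
        rw [abs_mul, abs_of_pos (rpow_pos_of_pos hN₀ _)]
        exact mul_le_mul_of_nonneg_left (hAB _ (by positivity)) (rpow_pos_of_pos hN₀ _).le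
    _ = A * x ^ γ + (N : ℝ) ^ (-γ) * B := by
        rw [mul_rpow hx hN₀.le, rpow_neg hN₀.le]
        field_simp
    _ ≤ A * x ^ γ + B := by nlinarith

theorem tendsto_integral_rpow_neg_mul_increment (hγ : 0 < γ) (hG : ContinuousOn G (Ici 0))
    (hG0 : G 0 = 0) (hlim : Tendsto (fun y => y ^ (-γ) * G y) atTop (𝓝 κ))
    {a b : ℝ → ℝ} {α β : ℝ} (ha : Continuous a) (hb : Continuous b)
    (ha₀ : ∀ θ ∈ uIcc α β, 0 ≤ a θ) (hb₀ : ∀ θ ∈ uIcc α β, 0 ≤ b θ) :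
    Tendsto (fun N : ℕ => ∫ θ in α..β,
        (N : ℝ) ^ (-γ) * (G (a θ * N) + G (b θ * N) - G ((a θ + b θ) * N))) atTop
      (𝓝 (∫ θ in α..β, κ * (a θ ^ γ + b θ ^ γ - (a θ + b θ) ^ γ))) := by
  obtain ⟨A, B, hB, hAB⟩ := exists_abs_le_rpow_add_of_tendsto hG hlim
  have hab₀ : ∀ θ ∈ uIcc α β, 0 ≤ a θ + b θ := fun θ hθ => add_nonneg (ha₀ θ hθ) (hb₀ θ hθ)
  have hcomp : ∀ c : ℝ → ℝ, Continuous c → (∀ θ ∈ uIcc α β, 0 ≤ c θ) → ∀ N : ℕ,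
      ContinuousOn (fun θ => G (c θ * N)) (uIcc α β) := fun c hc hc₀ N =>
    hG.comp (hc.mul continuous_const).continuousOn fun θ hθ =>
      mul_nonneg (hc₀ θ hθ) (Nat.cast_nonneg N)
  have hpow : ∀ c : ℝ → ℝ, Continuous c → Continuous fun θ => c θ ^ γ := fun c hc =>
    hc.rpow_const fun _ => Or.inr hγ.le
  refine intervalIntegral.tendsto_integral_filter_of_dominated_convergence
    (fun θ => (A * a θ ^ γ + B) + (A * b θ ^ γ + B) + (A * (a θ + b θ) ^ γ + B)) ?_ ?_ ?_ ?_
  · refine .of_forall fun N => ?_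
    exact ((continuousOn_const.mul (((hcomp a ha ha₀ N).add (hcomp b hb hb₀ N)).sub
      (hcomp _ (ha.add hb) hab₀ N))).mono uIoc_subset_uIcc).aestronglyMeasurable
      measurableSet_uIoc
  · filter_upwards [eventually_ge_atTop 1] with N hN
    refine ae_of_all _ fun θ hθ => ?_
    have hθ' := uIoc_subset_uIcc hθ
    rw [norm_eq_abs, mul_sub, mul_add]
    have h₁ := abs_rpow_neg_mul_comp_mul_natCast_le hγ.le hB hAB (ha₀ θ hθ') hN
    have h₂ := abs_rpow_neg_mul_comp_mul_natCast_le hγ.le hB hAB (hb₀ θ hθ') hN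
    have h₃ := abs_rpow_neg_mul_comp_mul_natCast_le hγ.le hB hAB (hab₀ θ hθ') hN
    exact (abs_sub _ _).trans (add_le_add ((abs_add_le _ _).trans (add_le_add h₁ h₂)) h₃)
  · exact (((continuous_const.mul (hpow a ha)).add continuous_const).add
      ((continuous_const.mul (hpow b hb)).add continuous_const) |>.add
      ((continuous_const.mul (hpow _ (ha.add hb))).add continuous_const)).intervalIntegrable _ _
  · refine ae_of_all _ fun θ hθ => ?_
    have hθ' := uIoc_subset_uIcc hθ
    have h := ((tendsto_rpow_neg_mul_comp_mul_natCast hγ hG0 hlim (ha₀ θ hθ')).add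
      (tendsto_rpow_neg_mul_comp_mul_natCast hγ hG0 hlim (hb₀ θ hθ'))).sub
      (tendsto_rpow_neg_mul_comp_mul_natCast hγ hG0 hlim (hab₀ θ hθ'))
    simpa only [mul_add, mul_sub] using h

end Scaling

theorem integral_rpow_increment {γ s t : ℝ} (hγ : 0 ≤ γ) :
    ∫ θ in (0:ℝ)..s, ((t - θ) ^ γ + (s - θ) ^ γ - ((t - θ) + (s - θ)) ^ γ) =
      (t ^ (γ + 1) - (t - s) ^ (γ + 1) + s ^ (γ + 1)
        - ((t + s) ^ (γ + 1) - (t - s) ^ (γ + 1)) / 2) / (γ + 1) := by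
  have h₁ : ∫ θ in (0:ℝ)..s, (t - θ) ^ γ = (t ^ (γ + 1) - (t - s) ^ (γ + 1)) / (γ + 1) := by
    rw [intervalIntegral.integral_comp_sub_left (fun x => x ^ γ) t,
      integral_rpow (Or.inl (by linarith)), sub_zero]
  have h₂ : ∫ θ in (0:ℝ)..s, (s - θ) ^ γ = s ^ (γ + 1) / (γ + 1) := by
    rw [intervalIntegral.integral_comp_sub_left (fun x => x ^ γ) s,
      integral_rpow (Or.inl (by linarith)), sub_zero, sub_self, zero_rpow (by linarith), sub_zero]
  have h₃ : ∫ θ in (0:ℝ)..s, ((t - θ) + (s - θ)) ^ γ =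
      ((t + s) ^ (γ + 1) - (t - s) ^ (γ + 1)) / 2 / (γ + 1) := by
    simp only [show ∀ θ : ℝ, (t - θ) + (s - θ) = t + s - 2 * θ from fun θ => by ring]
    rw [intervalIntegral.integral_comp_sub_mul (fun x => x ^ γ) two_ne_zero,
      integral_rpow (Or.inl (by linarith))]
    ring_nf
  have hint : ∀ c : ℝ → ℝ, Continuous c → IntervalIntegrable (fun θ => c θ ^ γ) volume 0 s :=
    fun c hc => (hc.rpow_const fun _ => Or.inr hγ).intervalIntegrable _ _
  have ht := hint (fun θ => t - θ) (by fun_prop)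
  have hs := hint (fun θ => s - θ) (by fun_prop)
  rw [intervalIntegral.integral_sub (ht.add hs) (hint (fun θ => (t - θ) + (s - θ)) (by fun_prop)),
    intervalIntegral.integral_add ht hs, h₁, h₂, h₃]
  ring

theorem four_mul_pi_rpow_neg_three_halves :
    (4 * π) ^ (-(3:ℝ)/2) = (8 * π ^ ((3:ℝ)/2))⁻¹ := by
  rw [neg_div, rpow_neg (by positivity), mul_rpow (by norm_num) pi_pos.le,
    show (4:ℝ) = 2 ^ (2:ℝ) by norm_num, ← rpow_mul (by norm_num)]
  norm_num

theorem limit_covariance_d3_general (q : ℝ → ℝ)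
    (hint : IntegrableOn q (Set.Ioi 0))
    (hlim : Tendsto (fun r => r ^ ((3:ℝ)/2) * q r) atTop (nhds ((4 * π) ^ (-(3:ℝ)/2))))
    (s t : ℝ) (hs : 0 ≤ s) (hst : s < t) :
    Tendsto (fun N : ℕ => (1 / Real.sqrt N) *
        ∫ θ in (0:ℝ)..s, ∫ r1 in (0:ℝ)..((t - θ) * N), ∫ r2 in (0:ℝ)..((s - θ) * N),
          q (r1 + r2)) atTop
      (nhds ((1 / (3 * π ^ ((3:ℝ)/2))) *
        (s ^ ((3:ℝ)/2) + t ^ ((3:ℝ)/2) - (1/2) * (t - s) ^ ((3:ℝ)/2)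
          - (1/2) * (t + s) ^ ((3:ℝ)/2)))) := by
  have hG := tendsto_rpow_mul_integratedTail (p := 3/2) (by norm_num) (by norm_num) hint hlim
  rw [show (3:ℝ)/2 - 2 = -(1/2) by norm_num] at hG
  have hθ : ∀ θ ∈ uIcc 0 s, 0 ≤ t - θ ∧ 0 ≤ s - θ := fun θ hθ => by
    rw [uIcc_of_le hs] at hθ
    constructor <;> linarith [hθ.2]
  have h := tendsto_integral_rpow_neg_mul_increment (by norm_num)
    (continuousOn_integratedTail hint) (by simp [integratedTail]) hG
    (a := fun θ => t - θ) (b := fun θ => s - θ) (by fun_prop) (by fun_prop)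
    (fun θ hθ' => (hθ θ hθ').1) (fun θ hθ' => (hθ θ hθ').2)
  rw [intervalIntegral.integral_const_mul, integral_rpow_increment (by norm_num),
    show (1/2:ℝ) + 1 = 3/2 by norm_num,
    four_mul_pi_rpow_neg_three_halves] at h
  convert h using 2 with N
  · rw [sqrt_eq_rpow, one_div, ← rpow_neg (Nat.cast_nonneg N),
      ← intervalIntegral.integral_const_mul]
    refine intervalIntegral.integral_congr fun θ hθ' => ?_
    obtain ⟨htθ, hsθ⟩ := hθ θ hθ'
    simp only [add_mul]
    rw [integral_integral_comp_add hint (by positivity) (by positivity)]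
  · field_simp
    ring

theorem limit_covariance_d3 (q : ℝ → ℝ) (hmeas : Measurable q) (hq0 : ∀ r > 0, 0 ≤ q r)
    (hint : IntegrableOn q (Set.Ioi 0))
    (hlim : Tendsto (fun r => r ^ ((3:ℝ)/2) * q r) atTop (nhds ((4 * π) ^ (-(3:ℝ)/2))))
    (s t : ℝ) (hs : 0 ≤ s) (hst : s < t) :
    Tendsto (fun N : ℕ => (1 / Real.sqrt N) *
        ∫ θ in (0:ℝ)..s, ∫ r1 in (0:ℝ)..((t - θ) * N), ∫ r2 in (0:ℝ)..((s - θ) * N),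
          q (r1 + r2)) atTop
      (nhds ((1 / (3 * π ^ ((3:ℝ)/2))) *
        (s ^ ((3:ℝ)/2) + t ^ ((3:ℝ)/2) - (1/2) * (t - s) ^ ((3:ℝ)/2)
          - (1/2) * (t + s) ^ ((3:ℝ)/2)))) :=
  limit_covariance_d3_general q hint hlim s t hs hst
end IntegralAsymptotics
end

section
/- Suppose $q:(0,\infty)\to[0,\infty)$ satisfies $q(r) \leq K r^{-3/2}$ for all $r > 0$ and some constant $K$. Then for all $0 \leq s < t$ and $N \geq 1$, $\frac{1}{N^{3/2}} \int_{sN}^{tN} \int_{sN}^{\theta} \int_0^{\infty} q(\theta - r + v)\,dv\,dr\,d\theta \leq \frac{8K}{3}(t-s)^{3/2}$. -/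
/-!
Bound the integrand by $K r^{p}$ and integrate three times: each integration raises the exponent
by one, so for $-2 < p < -1$ the triple integral over a window of length $L$ is at most
$K L^{p+3} / (-(p+1)(p+2)(p+3))$. For $p = -3/2$ this is $\frac{8K}{3} L^{3/2}$, and the window
$[sN, tN]$ has length $(t-s)N$, whose factor $N^{3/2}$ cancels the normalisation.
-/

open Real MeasureTheory Set

theorem integral_comp_add_left_Ioi {E : Type*} [NormedAddCommGroup E] [NormedSpace ℝ E]
    (f : ℝ → E) (a c : ℝ) : ∫ x in Ioi a, f (c + x) = ∫ x in Ioi (c + a), f x := by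
  rw [← (measurePreserving_add_left volume c).setIntegral_preimage_emb
    (MeasurableEquiv.addLeft c).measurableEmbedding f, preimage_const_add_Ioi, add_sub_cancel_left]

theorem MeasureTheory.IntegrableOn.comp_add_left_Ioi {E : Type*} [NormedAddCommGroup E]
    {f : ℝ → E} {a c : ℝ} (hf : IntegrableOn f (Ioi (c + a))) :
    IntegrableOn (fun x ↦ f (c + x)) (Ioi a) := by
  rw [← add_sub_cancel_left c a, ← preimage_const_add_Ioi]
  exact ((measurePreserving_add_left volume c).integrableOn_comp_preimage
    (MeasurableEquiv.addLeft c).measurableEmbedding).2 hf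

theorem intervalIntegral.integral_mono_of_nonneg_on_Ioo {f g : ℝ → ℝ} {a b : ℝ} (hab : a ≤ b)
    (hf : ∀ x ∈ Ioo a b, 0 ≤ f x) (hfg : ∀ x ∈ Ioo a b, f x ≤ g x)
    (hg : IntervalIntegrable g volume a b) : ∫ x in a..b, f x ≤ ∫ x in a..b, g x := by
  simp only [intervalIntegral.integral_of_le hab, integral_Ioc_eq_integral_Ioo]
  exact setIntegral_mono_of_nonneg hf hfg (hg.1.mono_set Ioo_subset_Ioc_self)

theorem intervalIntegrable_sub_left_rpow {e : ℝ} (he : -1 < e) (a b : ℝ) :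
    IntervalIntegrable (fun r ↦ (b - r) ^ e) volume a b := by
  have h := (intervalIntegral.intervalIntegrable_rpow' (a := 0) (b := b - a) he).comp_sub_left b
  rw [sub_zero, sub_sub_cancel] at h
  exact h.symm

theorem intervalIntegrable_sub_right_rpow {e : ℝ} (he : -1 < e) (a b : ℝ) :
    IntervalIntegrable (fun θ ↦ (θ - a) ^ e) volume a b := by
  have h := (intervalIntegral.intervalIntegrable_rpow' (a := 0) (b := b - a) he).comp_sub_right a
  rwa [zero_add, sub_add_cancel] at h

theorem integral_sub_left_rpow {e : ℝ} (he : -1 < e) (a b : ℝ) :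
    ∫ r in a..b, (b - r) ^ e = (b - a) ^ (e + 1) / (e + 1) := by
  rw [intervalIntegral.integral_comp_sub_left (fun x ↦ x ^ e), sub_self,
    integral_rpow (Or.inl he), zero_rpow (by linarith), sub_zero]

theorem integral_sub_right_rpow {e : ℝ} (he : -1 < e) (a b : ℝ) :
    ∫ θ in a..b, (θ - a) ^ e = (b - a) ^ (e + 1) / (e + 1) := by
  rw [intervalIntegral.integral_comp_sub_right (fun x ↦ x ^ e), sub_self,
    integral_rpow (Or.inl he), zero_rpow (by linarith), sub_zero]

section RpowDecay

variable {q : ℝ → ℝ} {K p : ℝ}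

theorem setIntegral_Ioi_comp_add_le (hq0 : ∀ r > 0, 0 ≤ q r) (hq : ∀ r > 0, q r ≤ K * r ^ p)
    (hp : p < -1) {c : ℝ} (hc : 0 < c) :
    ∫ v in Ioi 0, q (c + v) ≤ K / -(p + 1) * c ^ (p + 1) := by
  have hpos : ∀ v ∈ Ioi (0 : ℝ), 0 < c + v := fun v hv ↦ add_pos hc hv
  have hdominant : IntegrableOn (fun x ↦ K * x ^ p) (Ioi (c + 0)) := by
    rw [add_zero]
    exact (integrableOn_Ioi_rpow_of_lt hp hc).const_mul K
  calc ∫ v in Ioi 0, q (c + v)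
      ≤ ∫ v in Ioi 0, K * (c + v) ^ p :=
        setIntegral_mono_of_nonneg (fun v hv ↦ hq0 _ (hpos v hv)) (fun v hv ↦ hq _ (hpos v hv))
          hdominant.comp_add_left_Ioi
    _ = K / -(p + 1) * c ^ (p + 1) := by
        rw [integral_comp_add_left_Ioi (fun x ↦ K * x ^ p), add_zero, integral_const_mul,
          integral_Ioi_rpow_of_lt hp hc, div_neg]
        ring

theorem integral_setIntegral_Ioi_comp_sub_add_le (hq0 : ∀ r > 0, 0 ≤ q r)
    (hq : ∀ r > 0, q r ≤ K * r ^ p) (hp₂ : -2 < p) (hp₁ : p < -1) {a θ : ℝ} (haθ : a ≤ θ) :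
    ∫ r in a..θ, ∫ v in Ioi 0, q (θ - r + v)
      ≤ K / -(p + 1) / (p + 2) * (θ - a) ^ (p + 2) := by
  have hpos : ∀ r ∈ Ioo a θ, 0 < θ - r := fun r hr ↦ sub_pos.2 hr.2
  calc ∫ r in a..θ, ∫ v in Ioi 0, q (θ - r + v)
      ≤ ∫ r in a..θ, K / -(p + 1) * (θ - r) ^ (p + 1) := by
        refine intervalIntegral.integral_mono_of_nonneg_on_Ioo haθ
          (fun r hr ↦ setIntegral_nonneg measurableSet_Ioi fun v hv ↦ hq0 _ ?_)
          (fun r hr ↦ setIntegral_Ioi_comp_add_le hq0 hq hp₁ (hpos r hr)) ?_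
        · exact add_pos (hpos r hr) hv
        · exact (intervalIntegrable_sub_left_rpow (by linarith) a θ).const_mul _
    _ = K / -(p + 1) / (p + 2) * (θ - a) ^ (p + 2) := by
        rw [intervalIntegral.integral_const_mul, integral_sub_left_rpow (by linarith),
          show p + 1 + 1 = p + 2 by ring]
        ring

theorem integral_integral_setIntegral_Ioi_comp_sub_add_le (hq0 : ∀ r > 0, 0 ≤ q r)
    (hq : ∀ r > 0, q r ≤ K * r ^ p) (hp₂ : -2 < p) (hp₁ : p < -1) {a b : ℝ} (hab : a ≤ b) :
    ∫ θ in a..b, ∫ r in a..θ, ∫ v in Ioi 0, q (θ - r + v)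
      ≤ K / -(p + 1) / (p + 2) / (p + 3) * (b - a) ^ (p + 3) := by
  calc ∫ θ in a..b, ∫ r in a..θ, ∫ v in Ioi 0, q (θ - r + v)
      ≤ ∫ θ in a..b, K / -(p + 1) / (p + 2) * (θ - a) ^ (p + 2) := by
        refine intervalIntegral.integral_mono_of_nonneg_on_Ioo hab
          (fun θ hθ ↦ intervalIntegral.integral_nonneg hθ.1.le fun r hr ↦
            setIntegral_nonneg measurableSet_Ioi fun v hv ↦ hq0 _ ?_)
          (fun θ hθ ↦ integral_setIntegral_Ioi_comp_sub_add_le hq0 hq hp₂ hp₁ hθ.1.le) ?_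
        · exact add_pos_of_nonneg_of_pos (sub_nonneg.2 hr.2) hv
        · exact (intervalIntegrable_sub_right_rpow (by linarith) a b).const_mul _
    _ = K / -(p + 1) / (p + 2) / (p + 3) * (b - a) ^ (p + 3) := by
        rw [intervalIntegral.integral_const_mul, integral_sub_right_rpow (by linarith),
          show p + 2 + 1 = p + 3 by ring]
        ring

end RpowDecay

theorem tightness_bound_d3_general (q : ℝ → ℝ) (K : ℝ)
    (hq0 : ∀ r > 0, 0 ≤ q r) (hq : ∀ r > 0, q r ≤ K * r ^ (-(3:ℝ)/2))
    (s t : ℝ) (hst : s < t) (N : ℝ) (hN : 1 ≤ N) :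
    (1 / N ^ ((3:ℝ)/2)) *
        ∫ θ in (s * N)..(t * N), ∫ r in (s * N)..θ, ∫ v in Set.Ioi (0:ℝ), q (θ - r + v)
      ≤ (8 * K / 3) * (t - s) ^ ((3:ℝ)/2) := by
  have hN₀ : 0 < N := by linarith
  have hwindow : t * N - s * N = (t - s) * N := by ring
  have hbound := integral_integral_setIntegral_Ioi_comp_sub_add_le hq0 hq (by norm_num)
    (by norm_num) (mul_le_mul_of_nonneg_right hst.le hN₀.le)
  rw [show K / -(-3/2 + 1) / (-3/2 + 2) / (-3/2 + 3) = 8 * K / 3 by ring,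
    show -(3:ℝ)/2 + 3 = 3/2 by norm_num, hwindow, mul_rpow (sub_nonneg.2 hst.le) hN₀.le]
    at hbound
  calc (1 / N ^ ((3:ℝ)/2)) *
        ∫ θ in (s * N)..(t * N), ∫ r in (s * N)..θ, ∫ v in Set.Ioi (0:ℝ), q (θ - r + v)
      ≤ 1 / N ^ ((3:ℝ)/2) * (8 * K / 3 * ((t - s) ^ ((3:ℝ)/2) * N ^ ((3:ℝ)/2))) := by
        gcongr
    _ = (8 * K / 3) * (t - s) ^ ((3:ℝ)/2) := by
        field_simp

theorem tightness_bound_d3 (q : ℝ → ℝ) (K : ℝ) (hmeas : Measurable q)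
    (hq0 : ∀ r > 0, 0 ≤ q r) (hq : ∀ r > 0, q r ≤ K * r ^ (-(3:ℝ)/2))
    (s t : ℝ) (hs : 0 ≤ s) (hst : s < t) (N : ℝ) (hN : 1 ≤ N) :
    (1 / N ^ ((3:ℝ)/2)) *
        ∫ θ in (s * N)..(t * N), ∫ r in (s * N)..θ, ∫ v in Set.Ioi (0:ℝ), q (θ - r + v)
      ≤ (8 * K / 3) * (t - s) ^ ((3:ℝ)/2) :=
  tightness_bound_d3_general q K hq0 hq s t hst N hN
end

section
/- Suppose $q:(0,\infty)\to[0,\infty)$ is measurable with $\int_0^\infty q(v)\,dv \leq K_8$ and $q(v) \leq K_7 v^{-2}$ for all $v > 0$. Then for all $T > 0$, $N \geq \max\{4, T\}$, and $0 \leq s < t \leq T$: $\int_0^{(t-s)N} \int_0^\infty q(\theta + v)\,dv\,d\theta \leq (2K_7 + K_8)\log N$. -/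
open Real MeasureTheory

/-!
The inner integral is the tail `G θ = ∫_θ^∞ q`, which is nonincreasing, at most `K8`, and at
most `K7 / θ` by the decay of `q`. Bounding `G` by `K8` on `[0, 1]` and by `K7 / θ` on `[1, M]`
gives `∫_0^M G ≤ K8 + K7 log M` for `M ≥ 1` (shorter intervals only lose mass, as `G ≥ 0`).
Since `t - s ≤ T ≤ N`, we may take `M = max ((t - s) N) 1 ≤ N²`, so `log M ≤ 2 log N`, and
`N ≥ 4 > e` makes `log N ≥ 1`, which absorbs the constant `K8`.
-/

theorem setIntegral_Ioi_zero_comp_const_add (q : ℝ → ℝ) (θ : ℝ) :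
    ∫ v in Set.Ioi (0:ℝ), q (θ + v) = ∫ u in Set.Ioi θ, q u := by
  have h := (measurePreserving_add_left volume θ).setIntegral_preimage_emb
    (measurableEmbedding_addLeft θ) q (Set.Ioi θ)
  simpa using h

theorem setIntegral_Ioi_le_div_of_le_div_sq {q : ℝ → ℝ} {K θ : ℝ} (hθ : 0 < θ)
    (hq : IntegrableOn q (Set.Ioi θ)) (hqK : ∀ v > θ, q v ≤ K / v ^ 2) :
    ∫ u in Set.Ioi θ, q u ≤ K / θ := by
  have hdecay : IntegrableOn (fun v : ℝ => K * v ^ (-2:ℝ)) (Set.Ioi θ) :=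
    (integrableOn_Ioi_rpow_of_lt (by norm_num) hθ).const_mul K
  calc ∫ u in Set.Ioi θ, q u ≤ ∫ v in Set.Ioi θ, K * v ^ (-2:ℝ) := by
        refine setIntegral_mono_on hq hdecay measurableSet_Ioi fun v hv => ?_
        have hv0 : 0 < v := hθ.trans hv
        simpa [Real.rpow_neg hv0.le, div_eq_mul_inv] using hqK v hv
    _ = K / θ := by
        rw [integral_const_mul, integral_Ioi_rpow_of_lt (by norm_num) hθ]
        norm_num [Real.rpow_neg_one, div_eq_mul_inv]

theorem setIntegral_Ioi_antitoneOn {q : ℝ → ℝ} {a : ℝ} (hq : IntegrableOn q (Set.Ioi a))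
    (hq0 : ∀ v > a, 0 ≤ q v) :
    AntitoneOn (fun θ => ∫ u in Set.Ioi θ, q u) (Set.Ici a) := by
  intro x hx y _ hxy
  refine setIntegral_mono_set (hq.mono_set (Set.Ioi_subset_Ioi hx)) ?_
    (Set.Ioi_subset_Ioi hxy).eventuallyLE
  exact (ae_restrict_iff' measurableSet_Ioi).2 (.of_forall fun v hv => hq0 v (lt_of_le_of_lt hx hv))

theorem intervalIntegral_le_add_mul_log {F : ℝ → ℝ} {A B M : ℝ} (hM : 1 ≤ M)
    (hF : IntervalIntegrable F volume 0 M) (hFA : ∀ θ ∈ Set.Icc (0:ℝ) 1, F θ ≤ A)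
    (hFB : ∀ θ ∈ Set.Icc 1 M, F θ ≤ B / θ) :
    ∫ θ in (0:ℝ)..M, F θ ≤ A + B * log M := by
  have hF01 : IntervalIntegrable F volume 0 1 :=
    hF.mono_set (by
      rw [Set.uIcc_of_le zero_le_one, Set.uIcc_of_le (zero_le_one.trans hM)]
      exact Set.Icc_subset_Icc_right hM)
  have hF1M : IntervalIntegrable F volume 1 M :=
    hF.mono_set (by
      rw [Set.uIcc_of_le hM, Set.uIcc_of_le (zero_le_one.trans hM)]
      exact Set.Icc_subset_Icc_left zero_le_one)
  have h0M : (0:ℝ) ∉ Set.uIcc 1 M := by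
    rw [Set.uIcc_of_le hM]; exact fun h => absurd h.1 (by norm_num)
  have hinv : IntervalIntegrable (fun θ => B / θ) volume 1 M :=
    (continuousOn_const.div continuousOn_id fun _ hθ => ne_of_mem_of_not_mem hθ h0M)
      |>.intervalIntegrable
  rw [← intervalIntegral.integral_add_adjacent_intervals hF01 hF1M]
  gcongr
  · calc ∫ θ in (0:ℝ)..1, F θ ≤ ∫ θ in (0:ℝ)..1, A :=
          intervalIntegral.integral_mono_on zero_le_one hF01 intervalIntegrable_const hFA
      _ = A := by simp
  · calc ∫ θ in (1:ℝ)..M, F θ ≤ ∫ θ in (1:ℝ)..M, B / θ :=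
          intervalIntegral.integral_mono_on hM hF1M hinv hFB
      _ = B * log M := by
          simp_rw [div_eq_mul_inv, intervalIntegral.integral_const_mul, integral_inv h0M, div_one]

theorem intervalIntegral_setIntegral_Ioi_le {q : ℝ → ℝ} {K L M : ℝ}
    (hq0 : ∀ v > 0, 0 ≤ q v) (hqK : ∀ v > 0, q v ≤ K / v ^ 2)
    (hq : IntegrableOn q (Set.Ioi 0)) (hL : 0 ≤ L) (hLM : L ≤ M) (hM : 1 ≤ M) :
    ∫ θ in (0:ℝ)..L, ∫ u in Set.Ioi θ, q u ≤ (∫ u in Set.Ioi (0:ℝ), q u) + K * log M := by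
  set G : ℝ → ℝ := fun θ => ∫ u in Set.Ioi θ, q u
  have hG_nonneg : ∀ θ ≥ 0, 0 ≤ G θ := fun θ hθ =>
    setIntegral_nonneg measurableSet_Ioi fun v hv => hq0 v (lt_of_le_of_lt hθ hv)
  have hG_anti : AntitoneOn G (Set.Ici 0) := setIntegral_Ioi_antitoneOn hq hq0
  have hG_int : IntervalIntegrable G volume 0 M :=
    (hG_anti.mono (by simp [Set.uIcc_of_le (zero_le_one.trans hM), Set.Icc_subset_Ici_self]))
      |>.intervalIntegrable
  calc ∫ θ in (0:ℝ)..L, G θ ≤ ∫ θ in (0:ℝ)..M, G θ :=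
        intervalIntegral.integral_mono_interval le_rfl hL hLM
          ((ae_restrict_iff' measurableSet_Ioc).2 (.of_forall fun θ hθ => hG_nonneg θ hθ.1.le))
          hG_int
    _ ≤ G 0 + K * log M := by
        refine intervalIntegral_le_add_mul_log hM hG_int (fun θ hθ => ?_) (fun θ hθ => ?_)
        · exact hG_anti Set.self_mem_Ici hθ.1 hθ.1
        · exact setIntegral_Ioi_le_div_of_le_div_sq (zero_lt_one.trans_le hθ.1)
            (hq.mono_set (Set.Ioi_subset_Ioi (zero_le_one.trans hθ.1)))
            fun v hv => hqK v (by linarith [hθ.1])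

theorem tightness_bound_d4_general (q : ℝ → ℝ) (K7 K8 : ℝ)
    (hq0 : ∀ v > 0, 0 ≤ q v) (hq7 : ∀ v > 0, q v ≤ K7 / v ^ 2)
    (hintgr : IntegrableOn q (Set.Ioi 0)) (hK8 : ∫ v in Set.Ioi (0:ℝ), q v ≤ K8)
    (T : ℝ) (N : ℝ) (hN : max 4 T ≤ N)
    (s t : ℝ) (hs : 0 ≤ s) (hst : s < t) (ht : t ≤ T) :
    ∫ θ in (0:ℝ)..((t - s) * N), ∫ v in Set.Ioi (0:ℝ), q (θ + v)
      ≤ (2 * K7 + K8) * Real.log N := by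
  obtain ⟨hN4, hTN⟩ := max_le_iff.1 hN
  have hK7 : 0 ≤ K7 := by simpa using (hq0 1 one_pos).trans (hq7 1 one_pos)
  have hK8' : 0 ≤ K8 := (setIntegral_nonneg measurableSet_Ioi hq0).trans hK8
  have hlogN : 1 ≤ log N := by
    rw [le_log_iff_exp_le (by linarith)]
    linarith [exp_one_lt_d9]
  have hMN : max ((t - s) * N) 1 ≤ N * N := max_le (by gcongr; linarith) (by nlinarith)
  simp only [setIntegral_Ioi_zero_comp_const_add]
  calc _ ≤ (∫ u in Set.Ioi (0:ℝ), q u) + K7 * log (max ((t - s) * N) 1) :=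
        intervalIntegral_setIntegral_Ioi_le hq0 hq7 hintgr (by nlinarith) (le_max_left _ _)
          (le_max_right _ _)
    _ ≤ K8 + K7 * (2 * log N) := by
        gcongr
        calc log (max ((t - s) * N) 1) ≤ log (N * N) := log_le_log (by positivity) hMN
          _ = 2 * log N := by rw [log_mul (by linarith) (by linarith)]; ring
    _ ≤ (2 * K7 + K8) * log N := by nlinarith

theorem tightness_bound_d4 (q : ℝ → ℝ) (K7 K8 : ℝ) (hmeas : Measurable q)
    (hq0 : ∀ v > 0, 0 ≤ q v) (hq7 : ∀ v > 0, q v ≤ K7 / v ^ 2)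
    (hintgr : IntegrableOn q (Set.Ioi 0)) (hK8 : ∫ v in Set.Ioi (0:ℝ), q v ≤ K8)
    (T : ℝ) (hT : 0 < T) (N : ℝ) (hN : max 4 T ≤ N)
    (s t : ℝ) (hs : 0 ≤ s) (hst : s < t) (ht : t ≤ T) :
    ∫ θ in (0:ℝ)..((t - s) * N), ∫ v in Set.Ioi (0:ℝ), q (θ + v)
      ≤ (2 * K7 + K8) * Real.log N :=
  tightness_bound_d4_general q K7 K8 hq0 hq7 hintgr hK8 T N hN s t hs hst ht
end
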